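/- In a Grothendieck topos, let X be a decidable object and let i : Y ⟶ X be a monomorphism admitting a retraction r : X ⟶ Y (i.e. i ≫ r = 𝟙 Y). Then the subobject of X represented by i is complemented. -/

import Mathlib

/-!
Formalisation of a statement from "On the profinite fundamental group of a
connected Grothendieck topos" (Berger–Iwaniack).  A Grothendieck topos is
modelled as `Sheaf J (Type u)` for a small site `(C, J)`.
-/

open CategoryTheory CategoryTheory.Limits

universe u

instance {C : Type u} [SmallCategory C] (J : GrothendieckTopology C) :
    HasColimitsOfSize.{u, u} (Sheaf J (Type u)) :=
  Sheaf.instHasColimitsOfSize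

/-- A subobject `s` of `X` is complemented if it has a complement in the
subobject lattice of `X`. -/
def IsComplementedSub {C : Type u} [SmallCategory C] {J : GrothendieckTopology C}
    {X : Sheaf J (Type u)} (s : Subobject X) : Prop :=
  ∃ t : Subobject X, s ⊓ t = ⊥ ∧ s ⊔ t = ⊤

/-- An object is decidable if its diagonal, regarded as a subobject of `X ⨯ X`,
is complemented. -/
def IsDecidableObj {C : Type u} [SmallCategory C] {J : GrothendieckTopology C}
    (X : Sheaf J (Type u)) : Prop :=
  IsComplementedSub (Subobject.mk (diag X))

/-- An object is connected if it is not initial and its only complemented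
subobjects are `⊥` and `⊤`. -/
def IsConnectedObj {C : Type u} [SmallCategory C] {J : GrothendieckTopology C}
    (X : Sheaf J (Type u)) : Prop :=
  (¬ Nonempty (IsInitial X)) ∧
    ∀ s : Subobject X, IsComplementedSub s → s = ⊥ ∨ s = ⊤

/-- An object is locally connected if it is (isomorphic to) a coproduct of
connected objects. -/
def IsLocallyConnectedObj {C : Type u} [SmallCategory C] {J : GrothendieckTopology C}
    (X : Sheaf J (Type u)) : Prop :=
  ∃ (I : Type u) (Z : I → Sheaf J (Type u)),
    (∀ i, IsConnectedObj (Z i)) ∧ Nonempty (X ≅ ∐ Z)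

/-- An object is locally constant if it is trivialised, with constant fibres,
by some cover of the terminal object. -/
def IsLocallyConstantObj {C : Type u} [SmallCategory C] {J : GrothendieckTopology C}
    (X : Sheaf J (Type u)) : Prop :=
  ∃ (I : Type u) (U : I → Sheaf J (Type u)),
    Epi (terminal.from (∐ U)) ∧
    ∀ i, ∃ (S : Type u)
      (e : X ⨯ U i ≅ (constantSheaf J (Type u)).obj S ⨯ U i),
      e.hom ≫ Limits.prod.snd = Limits.prod.snd

/-- An object is locally finite if it is trivialised, with finite constant
fibres, by some cover of the terminal object. -/
def IsLocallyFiniteObj {C : Type u} [SmallCategory C] {J : GrothendieckTopology C}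
    (X : Sheaf J (Type u)) : Prop :=
  ∃ (I : Type u) (U : I → Sheaf J (Type u)),
    Epi (terminal.from (∐ U)) ∧
    ∀ i, ∃ (n : ℕ)
      (e : X ⨯ U i ≅ (constantSheaf J (Type u)).obj (ULift.{u} (Fin n)) ⨯ U i),
      e.hom ≫ Limits.prod.snd = Limits.prod.snd

/-- An object is finite if it is locally finite and a finite coproduct of
connected objects. -/
def IsFiniteObj {C : Type u} [SmallCategory C] {J : GrothendieckTopology C}
    (X : Sheaf J (Type u)) : Prop :=
  IsLocallyFiniteObj X ∧
    ∃ (n : ℕ) (Z : Fin n → Sheaf J (Type u)),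
      (∀ k, IsConnectedObj (Z k)) ∧ Nonempty (X ≅ ∐ Z)

/-- An object is a sum of finite objects if it is isomorphic to a coproduct of
finite objects. -/
def IsSumOfFiniteObj {C : Type u} [SmallCategory C] {J : GrothendieckTopology C}
    (X : Sheaf J (Type u)) : Prop :=
  ∃ (I : Type u) (Z : I → Sheaf J (Type u)),
    (∀ i, IsFiniteObj (Z i)) ∧ Nonempty (X ≅ ∐ Z)

/-- A Galois object: a connected, globally supported object `A` such that the
canonical morphism `∐_{g ∈ Aut A} A ⟶ A ⨯ A` is an isomorphism. -/
def IsGaloisObj {C : Type u} [SmallCategory C] {J : GrothendieckTopology C}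
    (A : Sheaf J (Type u)) : Prop :=
  IsConnectedObj A ∧ Epi (terminal.from A) ∧
    IsIso (Sigma.desc (f := fun _ : Aut A => A)
      (fun g => Limits.prod.lift (𝟙 A) g.hom))

/-!
Put `φ = ⟨𝟙, r ≫ i⟩ : X ⟶ X ⨯ X` for a retraction `r` of the split mono `i`. The pullback of
the diagonal along `φ` is the equalizer of `𝟙` and `r ≫ i`, which is `i` itself. Pulling back a
complement of the diagonal along `φ` therefore gives a complement of `Y`.
That pullback of subobjects preserves complements is where the topos is used: `⊥` is preserved
because initial objects are strict, and `A ⊔ B = ⊤` means that `A ⨿ B ⟶ X` is epi, which stays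
true after pullback since the pullback of `A ⨿ B` is the coproduct of the pullbacks
(extensivity) and epimorphisms of sheaves are stable under pullback.
-/

namespace CategoryTheory

section

variable {𝒞 : Type*} [Category 𝒞]

theorem Limits.Fork.IsLimit.isPullback_diag [HasBinaryProducts 𝒞] {X Y : 𝒞} {f g : X ⟶ Y}
    {c : Fork f g} (hc : IsLimit c) : IsPullback (c.ι ≫ f) c.ι (diag Y) (prod.lift f g) := by
  have sq : (c.ι ≫ f) ≫ diag Y = c.ι ≫ prod.lift f g := by
    ext <;> simp [c.condition]
  have fst_eq (s : PullbackCone (diag Y) (prod.lift f g)) :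
      s.fst = s.snd ≫ f ∧ s.fst = s.snd ≫ g := by
    constructor
    · simpa only [Category.assoc, prod.lift_fst, Category.comp_id] using s.condition =≫ prod.fst
    · simpa only [Category.assoc, prod.lift_snd, Category.comp_id] using s.condition =≫ prod.snd
  let lift s := hc.lift (Fork.ofι s.snd ((fst_eq s).1.symm.trans (fst_eq s).2))
  refine ⟨⟨sq⟩, ⟨PullbackCone.IsLimit.mk sq lift (fun s ↦ ?_) (fun s ↦ ?_) (fun s m _ hm ↦ ?_)⟩⟩
  · simp [lift, (fst_eq s).1]
  · simp [lift]
  · exact Fork.IsLimit.hom_ext hc (by simp [lift, hm])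

theorem FinitaryExtensive.isPullback_coprodMap_coprodDesc [FinitaryExtensive 𝒞] [HasPullbacks 𝒞]
    {A B Z W : 𝒞} (a : A ⟶ Z) (b : B ⟶ Z) (g : W ⟶ Z) :
    IsPullback (coprod.map (pullback.fst a g) (pullback.fst b g))
      (coprod.desc (pullback.snd a g) (pullback.snd b g)) (coprod.desc a b) g := by
  let f : (j : WalkingPair) → pairFunction A B j ⟶ Z
    | .left => a | .right => b
  let q₁ : (j : WalkingPair) → pairFunction (pullback a g) (pullback b g) j ⟶ pairFunction A B j
    | .left => pullback.fst a g | .right => pullback.fst b g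
  let q₂ : (j : WalkingPair) → pairFunction (pullback a g) (pullback b g) j ⟶ W
    | .left => pullback.snd a g | .right => pullback.snd b g
  have hu := (FinitaryExtensive.vanKampen _ (coprodIsCoprod A B)).isUniversal
  have hd := coprodIsCoprod (pullback a g) (pullback b g)
  have h := hu.isPullback_of_isColimit_right f (coprod.desc a b) g q₁ q₂
    (by rintro (_|_) <;> exact IsPullback.of_hasPullback _ _) hd
    (by rintro (_|_); exacts [coprod.inl_desc a b, coprod.inr_desc a b])
  let q₁' j := q₁ j ≫ Cofan.inj (BinaryCofan.mk coprod.inl coprod.inr) j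
  have h₁ : coprod.map (pullback.fst a g) (pullback.fst b g) = Cofan.IsColimit.desc hd q₁' := by
    apply coprod.hom_ext
    · rw [coprod.inl_map]; exact (Cofan.IsColimit.fac hd q₁' .left).symm
    · rw [coprod.inr_map]; exact (Cofan.IsColimit.fac hd q₁' .right).symm
  have h₂ : coprod.desc (pullback.snd a g) (pullback.snd b g) = Cofan.IsColimit.desc hd q₂ := by
    apply coprod.hom_ext
    · rw [coprod.inl_desc]; exact (Cofan.IsColimit.fac hd q₂ .left).symm
    · rw [coprod.inr_desc]; exact (Cofan.IsColimit.fac hd q₂ .right).symm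
  rwa [h₁, h₂]

namespace Subobject

theorem pullback_bot [HasPullbacks 𝒞] [HasInitial 𝒞] [HasStrictInitialObjects 𝒞]
    {W Z : 𝒞} (g : W ⟶ Z) : (pullback g).obj ⊥ = ⊥ := by
  refine le_antisymm ?_ bot_le
  obtain ⟨φ, -⟩ := isPullback_aux g ⊥
  have h : IsInitial ((pullback g).obj ⊥ : 𝒞) :=
    IsInitial.ofStrict (φ ≫ botCoeIsoInitial.hom) initialIsInitial
  exact le_of_comm (h.to _) (h.hom_ext _ _)

theorem mk_sup_mk_eq_top_iff_epi [HasImages 𝒞] [HasBinaryCoproducts 𝒞] [HasEqualizers 𝒞]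
    [Balanced 𝒞] {A B Z : 𝒞} (a : A ⟶ Z) (b : B ⟶ Z) [Mono a] [Mono b] :
    mk a ⊔ mk b = ⊤ ↔ Epi (coprod.desc a b) := by
  constructor
  · intro h
    have hle : mk a ⊔ mk b ≤ mk (image.ι (coprod.desc a b)) :=
      sup_le (mk_le_mk_of_comm (coprod.inl ≫ factorThruImage _) (by simp [coprod.inl_desc]))
        (mk_le_mk_of_comm (coprod.inr ≫ factorThruImage _) (by simp [coprod.inr_desc]))
    have : Epi (image.ι (coprod.desc a b)) := (epi_iff_mk_eq_top _).2 (top_unique (h ▸ hle))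
    rw [← image.fac (coprod.desc a b)]
    exact epi_comp _ _
  · intro _
    have fac : coprod.desc (ofMkLE a _ le_sup_left) (ofMkLE b _ le_sup_right) ≫
        (mk a ⊔ mk b).arrow = coprod.desc a b := by
      ext <;> simp [coprod.inl_desc, coprod.inr_desc]
    rw [← mk_arrow (mk a ⊔ mk b), ← epi_iff_mk_eq_top]
    exact epi_of_epi_fac fac

variable [FinitaryExtensive 𝒞] [HasPullbacks 𝒞] [HasImages 𝒞] [HasEqualizers 𝒞] [Balanced 𝒞]
  [(MorphismProperty.epimorphisms 𝒞).IsStableUnderBaseChange]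

theorem pullback_sup_eq_top {W Z : 𝒞} {x y : Subobject Z} (h : x ⊔ y = ⊤) (g : W ⟶ Z) :
    (pullback g).obj x ⊔ (pullback g).obj y = ⊤ := by
  rw [← mk_arrow x, ← mk_arrow y, mk_sup_mk_eq_top_iff_epi] at h
  rw [pullback_obj, pullback_obj, mk_sup_mk_eq_top_iff_epi, ← MorphismProperty.epimorphisms.iff]
  exact MorphismProperty.of_isPullback
    (FinitaryExtensive.isPullback_coprodMap_coprodDesc x.arrow y.arrow g)
    (MorphismProperty.epimorphisms.infer_property _)

theorem isCompl_pullback {W Z : 𝒞} {x y : Subobject Z} (h : IsCompl x y) (g : W ⟶ Z) :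
    IsCompl ((pullback g).obj x) ((pullback g).obj y) where
  disjoint := by rw [disjoint_iff, ← inf_pullback, h.inf_eq_bot, pullback_bot]
  codisjoint := codisjoint_iff.2 (pullback_sup_eq_top h.sup_eq_top g)

end Subobject

end

open Opposite in
instance Sheaf.isStableUnderBaseChange_epimorphisms {C : Type u} [SmallCategory C]
    (J : GrothendieckTopology C) :
    (MorphismProperty.epimorphisms (Sheaf J (Type u))).IsStableUnderBaseChange := by
  refine .mk' fun V W Z f g _ hg ↦ ?_
  have : Sheaf.IsLocallySurjective g := (Sheaf.isLocallySurjective_iff_epi g).2 hg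
  have : Sheaf.IsLocallySurjective (pullback.fst f g) := ⟨fun {U} s ↦ by
    refine J.superset_covering ?_ (Presheaf.imageSieve_mem J g.hom (f.hom.app (op U) s))
    rintro U' h ⟨w, hw⟩
    -- pullbacks of sheaves are computed sectionwise, so `(s|U', w)` is a section of the pullback
    let ev := sheafToPresheaf J (Type u) ⋙ (evaluation Cᵒᵖ (Type u)).obj (op U')
    let p : Types.PullbackObj (ev.map f) (ev.map g) :=
      ⟨(V.obj.map h.op s, w), (ConcreteCategory.congr_hom (f.hom.naturality h.op) s).trans hw.symm⟩
    refine ⟨(PreservesPullback.iso ev f g).inv ((Types.pullbackIsoPullback _ _).inv p), ?_⟩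
    exact (ConcreteCategory.congr_hom (PreservesPullback.iso_inv_fst ev f g) _).trans
      (Types.pullbackIsoPullback_inv_fst_apply (ev.map f) (ev.map g) p)⟩
  exact (Sheaf.isLocallySurjective_iff_epi _).1 this

end CategoryTheory

/-- in a Grothendieck topos, any monomorphism admitting a
retraction into a decidable object is a complemented subobject. -/
theorem retract_of_decidable_isComplemented
    {C : Type u} [SmallCategory C] {J : GrothendieckTopology C}
    {X Y : Sheaf J (Type u)} (hX : IsDecidableObj X)
    (i : Y ⟶ X) [Mono i] (r : X ⟶ Y) (hr : i ≫ r = 𝟙 Y) :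
    IsComplementedSub (Subobject.mk i) := by
  obtain ⟨t, hinf, hsup⟩ := hX
  have : IsSplitMono i := .mk' ⟨r, hr⟩
  let φ : X ⟶ X ⨯ X := prod.lift (𝟙 X) (retraction i ≫ i)
  have hY : (Subobject.pullback φ).obj (Subobject.mk (diag X)) = Subobject.mk i :=
    Subobject.pullback_obj_mk (Fork.IsLimit.isPullback_diag (isSplitMonoEqualizes i))
  have hc := Subobject.isCompl_pullback ⟨disjoint_iff.2 hinf, codisjoint_iff.2 hsup⟩ φ
  rw [hY] at hc
  exact ⟨_, hc.inf_eq_bot, hc.sup_eq_top⟩
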